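/- arXiv:2404.00115 — 3 statements merged into one kernel-verified Lean document; each statement's English description precedes it below -/
import Mathlib

section
/- Let P be a smooth function on ℝⁿ \ {0} which is positively homogeneous of degree m with m ∉ {0,1}, and suppose P satisfies the ∞-Laplacian equation ∑_{i,j} P_{x_i x_j} P_{x_i} P_{x_j} = 0 on ℝⁿ \ {0}. Then P is identically zero. -/
open Real Filter

private def rfun {n : ℕ} (y : Fin n → ℝ) : ℝ := ∑ i, y i ^ 2

private noncomputable def Drfun {n : ℕ} (y : Fin n → ℝ) : (Fin n → ℝ) →L[ℝ] ℝ :=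
  ∑ i, (2 * y i) • (ContinuousLinearMap.proj i : (Fin n → ℝ) →L[ℝ] ℝ)

private lemma Drfun_apply {n : ℕ} (y v : Fin n → ℝ) :
    Drfun y v = ∑ i, 2 * y i * v i := by
  simp [Drfun, mul_assoc]

private lemma rfun_hasFDerivAt {n : ℕ} (y : Fin n → ℝ) :
    HasFDerivAt rfun (Drfun y) y := by
  have h : ∀ i : Fin n, HasFDerivAt (fun z : Fin n → ℝ => z i ^ 2)
      ((2 * y i) • (ContinuousLinearMap.proj i : (Fin n → ℝ) →L[ℝ] ℝ)) y := by
    intro i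
    have h := ((ContinuousLinearMap.proj i : (Fin n → ℝ) →L[ℝ] ℝ).hasFDerivAt (x := y)).fun_mul
      ((ContinuousLinearMap.proj i : (Fin n → ℝ) →L[ℝ] ℝ).hasFDerivAt (x := y))
    simpa [pow_two, two_mul, add_smul] using h
  exact HasFDerivAt.fun_sum (fun i _ => h i)

private lemma rfun_nonneg {n : ℕ} (y : Fin n → ℝ) : 0 ≤ rfun y :=
  Finset.sum_nonneg fun i _ => sq_nonneg _

private lemma rfun_pos {n : ℕ} {y : Fin n → ℝ} (hy : y ≠ 0) : 0 < rfun y := by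
  obtain ⟨i, hi⟩ := Function.ne_iff.mp hy
  exact Finset.sum_pos' (fun j _ => sq_nonneg _)
    ⟨i, Finset.mem_univ i, by simpa using (pow_pos (abs_pos.mpr hi) 2).trans_le (by rw [sq_abs])⟩

private lemma rfun_smul {n : ℕ} (c : ℝ) (y : Fin n → ℝ) :
    rfun (c • y) = c ^ 2 * rfun y := by
  simp [rfun, mul_pow, Finset.mul_sum]

private noncomputable def Ffun {n : ℕ} (m : ℝ) (P : (Fin n → ℝ) → ℝ) (y : Fin n → ℝ) : ℝ :=
  P y * rfun y ^ (-(m/2))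

private lemma Ffun_hasFDerivAt {n : ℕ} {m : ℝ} {P : (Fin n → ℝ) → ℝ} {y : Fin n → ℝ}
    (hPd : DifferentiableAt ℝ P y) (h1 : rfun y = 1) :
    HasFDerivAt (Ffun m P) (P y • ((-(m/2)) • Drfun y) + fderiv ℝ P y) y := by
  have hrpow : HasDerivAt (fun t : ℝ => t ^ (-(m/2))) (-(m/2)) (rfun y) := by
    have := Real.hasDerivAt_rpow_const (x := rfun y) (p := -(m/2))
      (Or.inl (by rw [h1]; norm_num))
    simpa [h1] using this
  have hQ : HasFDerivAt (fun z : Fin n → ℝ => (rfun z) ^ (-(m/2)))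
      ((-(m/2)) • Drfun y) y := by
    have h := hrpow.comp_hasFDerivAt y (rfun_hasFDerivAt y)
    simp only [Function.comp_def] at h
    convert h using 2
  have := hPd.hasFDerivAt.fun_mul hQ
  rw [h1, Real.one_rpow, one_smul] at this
  exact this

private lemma Ffun_smul {n : ℕ} {m : ℝ} {P : (Fin n → ℝ) → ℝ}
    (hhom : ∀ c : ℝ, 0 < c → ∀ x : Fin n → ℝ, x ≠ 0 → P (c • x) = c ^ m * P x)
    {c : ℝ} (hc : 0 < c) {y : Fin n → ℝ} (hy : y ≠ 0) :
    Ffun m P (c • y) = Ffun m P y := by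
  have h2 : ((c:ℝ) ^ (2:ℕ) * rfun y) ^ (-(m/2)) = (c ^ m)⁻¹ * (rfun y) ^ (-(m/2)) := by
    rw [Real.mul_rpow (by positivity) (rfun_nonneg y)]
    congr 1
    rw [← Real.rpow_natCast c 2, ← Real.rpow_mul hc.le, ← Real.rpow_neg hc.le]
    ring_nf
  have hcm : c ^ m ≠ 0 := (Real.rpow_pos_of_pos hc m).ne'
  unfold Ffun
  rw [rfun_smul, hhom c hc y hy, h2]
  field_simp

private lemma ray_euler {n : ℕ} {k : ℝ} {g : (Fin n → ℝ) → ℝ} {x : Fin n → ℝ}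
    (hg : DifferentiableAt ℝ g x)
    (hhomg : ∀ c : ℝ, 0 < c → g (c • x) = c ^ k * g x) :
    fderiv ℝ g x x = k * g x := by
  have h1 : HasDerivAt (fun c : ℝ => c • x) x 1 := by
    simpa using (hasDerivAt_id (1:ℝ)).smul_const x
  have h2 : HasDerivAt (fun c : ℝ => g (c • x)) (fderiv ℝ g x x) 1 := by
    have hg' : HasFDerivAt g (fderiv ℝ g x) ((fun c : ℝ => c • x) 1) := by
      simpa using hg.hasFDerivAt
    simpa [Function.comp_def] using hg'.comp_hasDerivAt 1 h1
  have h3 : HasDerivAt (fun c : ℝ => c ^ k * g x) (k * g x) 1 := by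
    simpa using (Real.hasDerivAt_rpow_const (x := (1:ℝ)) (p := k)
      (Or.inl one_ne_zero)).mul_const (g x)
  have h4 : (fun c : ℝ => g (c • x)) =ᶠ[nhds 1] (fun c : ℝ => c ^ k * g x) := by
    filter_upwards [isOpen_Ioi.eventually_mem (show (1:ℝ) ∈ Set.Ioi (0:ℝ) by norm_num)]
      with c hc
    exact hhomg c hc
  exact h2.unique (h3.congr_of_eventuallyEq h4)

private lemma fderiv_homog {n : ℕ} {m : ℝ} {P : (Fin n → ℝ) → ℝ}
    (hsmooth : ContDiffOn ℝ (⊤ : ℕ∞) P {x : Fin n → ℝ | x ≠ 0})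
    (hhom : ∀ c : ℝ, 0 < c → ∀ x : Fin n → ℝ, x ≠ 0 → P (c • x) = c ^ m * P x)
    {c : ℝ} (hc : 0 < c) {x : Fin n → ℝ} (hx : x ≠ 0) (v : Fin n → ℝ) :
    fderiv ℝ P (c • x) v = c ^ (m - 1) * fderiv ℝ P x v := by
  have hU : IsOpen {x : Fin n → ℝ | x ≠ 0} := isOpen_ne
  have hPd : ∀ y : Fin n → ℝ, y ≠ 0 → DifferentiableAt ℝ P y := fun y hy =>
    (hsmooth.contDiffAt (hU.mem_nhds hy)).differentiableAt (by simp)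
  have hcx : c • x ≠ 0 := smul_ne_zero hc.ne' hx
  have hsm : HasFDerivAt (fun y : Fin n → ℝ => c • y)
      (c • ContinuousLinearMap.id ℝ (Fin n → ℝ)) x := by
    exact (c • ContinuousLinearMap.id ℝ (Fin n → ℝ)).hasFDerivAt
  have h1 : HasFDerivAt (fun y => P (c • y))
      ((fderiv ℝ P (c • x)).comp (c • ContinuousLinearMap.id ℝ (Fin n → ℝ))) x :=
    (hPd _ hcx).hasFDerivAt.comp x hsm
  have h2 : (fun y => P (c • y)) =ᶠ[nhds x] (fun y => c ^ m * P y) := by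
    filter_upwards [hU.mem_nhds hx] with y hy
    exact hhom c hc y hy
  have h3 : fderiv ℝ (fun y => P (c • y)) x = c ^ m • fderiv ℝ P x := by
    rw [h2.fderiv_eq, fderiv_const_mul (hPd x hx)]
  have h4 := h1.fderiv
  rw [h3] at h4
  have h5 := DFunLike.congr_fun h4.symm v
  simp only [ContinuousLinearMap.coe_comp', Function.comp_apply,
    ContinuousLinearMap.smul_apply, ContinuousLinearMap.coe_smul',
    ContinuousLinearMap.coe_id', Pi.smul_apply, id_eq, smul_eq_mul,
    map_smul] at h5
  have hrw : c ^ (m - 1) = c ^ m / c := by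
    rw [Real.rpow_sub hc, Real.rpow_one]
  rw [hrw]
  field_simp
  linarith [h5]
private lemma key {n : ℕ} {m : ℝ} (hm0 : m ≠ 0) (hm1 : m ≠ 1) {P : (Fin n → ℝ) → ℝ}
    (hsmooth : ContDiffOn ℝ (⊤ : ℕ∞) P {x : Fin n → ℝ | x ≠ 0})
    (hhom : ∀ c : ℝ, 0 < c → ∀ x : Fin n → ℝ, x ≠ 0 → P (c • x) = c ^ m * P x)
    (hinf : ∀ x : Fin n → ℝ, x ≠ 0 →
      ∑ i : Fin n, ∑ j : Fin n,
        (fderiv ℝ (fun y => fderiv ℝ P y (Pi.single i 1)) x (Pi.single j 1))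
          * fderiv ℝ P x (Pi.single i 1) * fderiv ℝ P x (Pi.single j 1) = 0)
    {x₀ : Fin n → ℝ} (hx₀ : x₀ ≠ 0) (hr : ∑ i, x₀ i ^ 2 = 1)
    (hgrad : ∀ i, fderiv ℝ P x₀ (Pi.single i 1) = m * P x₀ * x₀ i) :
    P x₀ = 0 := by
  have hU : IsOpen {x : Fin n → ℝ | x ≠ 0} := isOpen_ne
  have hPd : ∀ y : Fin n → ℝ, y ≠ 0 → DifferentiableAt ℝ P y := fun y hy =>
    (hsmooth.contDiffAt (hU.mem_nhds hy)).differentiableAt (by simp)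
  -- differentiability of y ↦ fderiv P y v at x₀
  have hgd : ∀ v : Fin n → ℝ, DifferentiableAt ℝ (fun y => fderiv ℝ P y v) x₀ := by
    intro v
    have h1 : ContDiffAt ℝ (⊤ : ℕ∞) (fderiv ℝ P) x₀ :=
      (hsmooth.contDiffAt (hU.mem_nhds hx₀)).fderiv_right (by simp)
    exact (h1.differentiableAt (by simp)).clm_apply (differentiableAt_const v)
  -- Euler identity for P
  have heuler : fderiv ℝ P x₀ x₀ = m * P x₀ :=
    ray_euler (hPd x₀ hx₀) (fun c hc => hhom c hc x₀ hx₀)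
  -- second-order Euler identity
  have hK : fderiv ℝ (fun y => fderiv ℝ P y x₀) x₀ x₀ = (m - 1) * (m * P x₀) := by
    have := ray_euler (hgd x₀) (fun c hc => fderiv_homog hsmooth hhom hc hx₀ x₀)
    rw [this, heuler]
  -- decomposition of fderiv P y x₀ into coordinates
  have hdecomp : ∀ y : Fin n → ℝ,
      fderiv ℝ P y x₀ = ∑ i, x₀ i * fderiv ℝ P y (Pi.single i 1) := by
    intro y
    have hx : x₀ = ∑ i, x₀ i • (Pi.single i 1 : Fin n → ℝ) := by
      funext j
      simp [Pi.single_apply, Finset.sum_ite_eq']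
    conv_lhs => rw [hx]
    simp [map_sum, smul_eq_mul]
  -- fderiv of the decomposed function
  have hA : ∀ w : Fin n → ℝ, fderiv ℝ (fun y => fderiv ℝ P y x₀) x₀ w
      = ∑ i, x₀ i * fderiv ℝ (fun y => fderiv ℝ P y (Pi.single i 1)) x₀ w := by
    intro w
    have h1 : (fun y => fderiv ℝ P y x₀)
        = fun y => ∑ i, x₀ i * fderiv ℝ P y (Pi.single i 1) := funext hdecomp
    rw [h1, fderiv_fun_sum (fun i _ => (hgd _).const_mul _)]
    simp only [ContinuousLinearMap.coe_sum', Finset.sum_apply]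
    refine Finset.sum_congr rfl fun i _ => ?_
    rw [fderiv_const_mul (hgd _)]
    simp
  -- K x₀ in terms of basis vectors
  have hKx : fderiv ℝ (fun y => fderiv ℝ P y x₀) x₀ x₀
      = ∑ j, x₀ j * fderiv ℝ (fun y => fderiv ℝ P y x₀) x₀ (Pi.single j 1) := by
    have hx : x₀ = ∑ j, x₀ j • (Pi.single j 1 : Fin n → ℝ) := by
      funext j; simp [Pi.single_apply, Finset.sum_ite_eq']
    set K := fderiv ℝ (fun y => fderiv ℝ P y x₀) x₀ with hKdef
    calc K x₀ = K (∑ j, x₀ j • (Pi.single j 1 : Fin n → ℝ)) := by rw [← hx]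
      _ = ∑ j, x₀ j * K (Pi.single j 1) := by simp [smul_eq_mul]
  -- assemble
  have hsum := hinf x₀ hx₀
  simp only [hgrad] at hsum
  set p := P x₀ with hp
  set H : Fin n → Fin n → ℝ := fun i j =>
    fderiv ℝ (fun y => fderiv ℝ P y (Pi.single i 1)) x₀ (Pi.single j 1) with hH
  have e1 : ∑ i, ∑ j, H i j * (m * p * x₀ i) * (m * p * x₀ j)
      = (m * p)^2 * ∑ j, x₀ j * ∑ i, x₀ i * H i j := by
    rw [Finset.sum_comm, Finset.mul_sum]
    refine Finset.sum_congr rfl fun j _ => ?_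
    rw [Finset.mul_sum, Finset.mul_sum]
    refine Finset.sum_congr rfl fun i _ => ?_
    ring
  have e2 : ∑ j, x₀ j * ∑ i, x₀ i * H i j = (m - 1) * (m * p) := by
    rw [← hK, hKx]
    refine Finset.sum_congr rfl fun j _ => ?_
    rw [hA]
  rw [e1, e2] at hsum
  have hfin : m^3 * (m - 1) * p^3 = 0 := by rw [← hsum]; ring
  have hp3 : p ^ 3 = 0 := by
    have h1 : m ^ 3 ≠ 0 := pow_ne_zero _ hm0
    have h2 : m - 1 ≠ 0 := sub_ne_zero.mpr hm1
    have := mul_ne_zero h1 h2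
    exact (mul_eq_zero.mp hfin).resolve_left this
  exact pow_eq_zero_iff (by norm_num) |>.mp hp3

/-- If `P` is smooth on `ℝⁿ \ {0}`, positively homogeneous of degree `m ∉ {0,1}`,
and satisfies the ∞-Laplacian equation `∑ᵢⱼ P_{xᵢxⱼ} P_{xᵢ} P_{xⱼ} = 0` there,
then `P` vanishes identically on `ℝⁿ \ {0}`. -/
theorem stmt0 {n : ℕ} (m : ℝ) (hm0 : m ≠ 0) (hm1 : m ≠ 1)
    (P : (Fin n → ℝ) → ℝ)
    (hsmooth : ContDiffOn ℝ (⊤ : ℕ∞) P {x : Fin n → ℝ | x ≠ 0})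
    (hhom : ∀ c : ℝ, 0 < c → ∀ x : Fin n → ℝ, x ≠ 0 → P (c • x) = c ^ m * P x)
    (hinf : ∀ x : Fin n → ℝ, x ≠ 0 →
      ∑ i : Fin n, ∑ j : Fin n,
        (fderiv ℝ (fun y => fderiv ℝ P y (Pi.single i 1)) x (Pi.single j 1))
          * fderiv ℝ P x (Pi.single i 1) * fderiv ℝ P x (Pi.single j 1) = 0) :
    ∀ x : Fin n → ℝ, x ≠ 0 → P x = 0 := by
  intro x hx
  rcases Nat.eq_zero_or_pos n with hn | hn
  · subst hn; exact absurd (funext fun i => i.elim0) hx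
  have hU : IsOpen {x : Fin n → ℝ | x ≠ 0} := isOpen_ne
  have hPd : ∀ y : Fin n → ℝ, y ≠ 0 → DifferentiableAt ℝ P y := fun y hy =>
    (hsmooth.contDiffAt (hU.mem_nhds hy)).differentiableAt (by simp)
  set S : Set (Fin n → ℝ) := {y | rfun y = 1} with hSdef
  have hSne0 : ∀ y ∈ S, y ≠ 0 := by
    intro y hy h0
    rw [hSdef, Set.mem_setOf_eq, h0] at hy
    simp [rfun] at hy
  have hScl : IsClosed S := by
    have hc : Continuous (rfun (n := n)) := by
      unfold rfun; fun_prop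
    exact isClosed_eq hc continuous_const
  have hSb : Bornology.IsBounded S := by
    refine (Metric.isBounded_closedBall (x := (0 : Fin n → ℝ)) (r := 1)).subset ?_
    intro y hy
    rw [Metric.mem_closedBall, dist_zero_right]
    refine (pi_norm_le_iff_of_nonneg zero_le_one).mpr fun i => ?_
    have h1 : y i ^ 2 ≤ 1 := by
      have h2 := Finset.single_le_sum (f := fun j => y j ^ 2)
        (fun j _ => sq_nonneg _) (Finset.mem_univ i)
      have h3 : rfun y = 1 := hy
      rw [rfun] at h3
      simpa [h3] using h2
    rw [Real.norm_eq_abs]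
    nlinarith [abs_nonneg (y i), sq_abs (y i)]
  have hScpt : IsCompact S := Metric.isCompact_iff_isClosed_bounded.mpr ⟨hScl, hSb⟩
  have hSne : S.Nonempty := by
    refine ⟨Pi.single ⟨0, hn⟩ 1, ?_⟩
    show rfun _ = 1
    rw [rfun]
    simp [Pi.single_apply, apply_ite (fun t : ℝ => t ^ 2), Finset.sum_ite_eq']
  have hFc : ContinuousOn (Ffun m P) S := fun y hy =>
    ((Ffun_hasFDerivAt (hPd y (hSne0 y hy)) hy).differentiableAt.continuousAt).continuousWithinAt
  obtain ⟨x₀, hx₀S, hmax⟩ := hScpt.exists_isMaxOn hSne hFc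
  obtain ⟨x₁, hx₁S, hmin⟩ := hScpt.exists_isMinOn hSne hFc
  have hproj : ∀ y : Fin n → ℝ, y ≠ 0 → ∃ c : ℝ, 0 < c ∧ (c • y) ∈ S := by
    intro y hy
    have hry : 0 < rfun y := rfun_pos hy
    refine ⟨(Real.sqrt (rfun y))⁻¹, by positivity, ?_⟩
    show rfun _ = 1
    rw [rfun_smul]
    rw [inv_pow, Real.sq_sqrt hry.le]
    field_simp
  have hkey : ∀ z, z ∈ S → (P z • ((-(m/2)) • Drfun z) + fderiv ℝ P z = 0) → P z = 0 := by
    intro z hzS hL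
    have hz : z ≠ 0 := hSne0 z hzS
    have hgrad : ∀ i, fderiv ℝ P z (Pi.single i 1) = m * P z * z i := by
      intro i
      have h := DFunLike.congr_fun hL (Pi.single i 1)
      simp only [ContinuousLinearMap.add_apply, ContinuousLinearMap.smul_apply,
        ContinuousLinearMap.zero_apply, smul_eq_mul] at h
      have hsum : Drfun z (Pi.single i 1) = 2 * z i := by
        rw [Drfun_apply]
        simp [Pi.single_apply, mul_ite, Finset.sum_ite_eq']
      rw [hsum] at h
      linarith [h]
    exact key hm0 hm1 hsmooth hhom hinf hz hzS hgrad
  have hglobalmax : ∀ y : Fin n → ℝ, y ≠ 0 → Ffun m P y ≤ Ffun m P x₀ := by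
    intro y hy
    obtain ⟨c, hc, hcS⟩ := hproj y hy
    calc Ffun m P y = Ffun m P (c • y) := (Ffun_smul hhom hc hy).symm
      _ ≤ Ffun m P x₀ := hmax hcS
  have hglobalmin : ∀ y : Fin n → ℝ, y ≠ 0 → Ffun m P x₁ ≤ Ffun m P y := by
    intro y hy
    obtain ⟨c, hc, hcS⟩ := hproj y hy
    calc Ffun m P x₁ ≤ Ffun m P (c • y) := hmin hcS
      _ = Ffun m P y := Ffun_smul hhom hc hy
  have hmax0 : P x₀ = 0 := by
    refine hkey x₀ hx₀S ?_
    have hloc : IsLocalMax (Ffun m P) x₀ := by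
      filter_upwards [hU.mem_nhds (hSne0 _ hx₀S)] with y hy
      exact hglobalmax y hy
    exact hloc.hasFDerivAt_eq_zero (Ffun_hasFDerivAt (hPd _ (hSne0 _ hx₀S)) hx₀S)
  have hmin0 : P x₁ = 0 := by
    refine hkey x₁ hx₁S ?_
    have hloc : IsLocalMin (Ffun m P) x₁ := by
      filter_upwards [hU.mem_nhds (hSne0 _ hx₁S)] with y hy
      exact hglobalmin y hy
    exact hloc.hasFDerivAt_eq_zero (Ffun_hasFDerivAt (hPd _ (hSne0 _ hx₁S)) hx₁S)
  have hFS : ∀ w, w ∈ S → Ffun m P w = P w := by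
    intro w hw
    have hw1 : rfun w = 1 := hw
    rw [Ffun, hw1, Real.one_rpow, mul_one]
  have hPS : ∀ z, z ∈ S → P z = 0 := by
    intro z hz
    obtain ⟨c, hc, hcS⟩ := hproj z (hSne0 z hz)
    have h1 : Ffun m P z ≤ Ffun m P x₀ := hmax hz
    have h2 : Ffun m P x₁ ≤ Ffun m P z := hmin hz
    rw [hFS z hz, hFS x₀ hx₀S, hmax0] at h1
    rw [hFS z hz, hFS x₁ hx₁S, hmin0] at h2
    linarith
  obtain ⟨c, hc, hcS⟩ := hproj x hx
  have h0 := hPS _ hcS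
  rw [hhom c hc x hx] at h0
  exact (mul_eq_zero.mp h0).resolve_left (Real.rpow_pos_of_pos hc m).ne'
end

section
/- Let P be a polynomial on ℝⁿ solving the minimal surface equation (1 + |∇P|²)ΔP − ∑_{i,j} P_{x_i} P_{x_j} P_{x_i x_j} = 0, with deg P = m ≥ 2, and write P = P_m + ⋯ + P_1 as a sum of homogeneous components. Then the top-degree component satisfies L P_m := |∇P_m|² ΔP_m − ∑_{i,j} P_{m,x_i} P_{m,x_j} P_{m,x_i x_j} = 0. -/
/-!
Write `Q = P_m` and `m = k + 2`. Each of `|∇P|²`, `ΔP` and `Δ_∞ P = ∑ᵢⱼ P_{xᵢ} P_{xⱼ} P_{xᵢxⱼ}`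
is a sum of products whose factors have degree at most `k + 1` or `k`, so its component in the
top possible degree is obtained by replacing `P` with `Q`. The minimal surface equation reads
`ΔP + (|∇P|² ΔP − Δ_∞ P) = 0`; since `ΔP` has degree at most `k < 3k + 2`, taking the component
of degree `3k + 2` leaves `|∇Q|² ΔQ − Δ_∞ Q = 0`.
-/

open Finset

namespace MvPolynomial

variable {σ R : Type*}

section CommSemiring

variable [CommSemiring R]

theorem sum_range_homogeneousComponent_of_totalDegree_le {p : MvPolynomial σ R} {a : ℕ}
    (h : p.totalDegree ≤ a) : ∑ j ∈ range (a + 1), homogeneousComponent j p = p := by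
  conv_rhs => rw [← sum_homogeneousComponent p]
  refine (sum_subset (range_subset_range.mpr (by omega)) fun j _ hj => ?_).symm
  exact homogeneousComponent_eq_zero j p (by simp only [mem_range, not_lt] at hj; omega)

theorem homogeneousComponent_mul_of_totalDegree_le {p q : MvPolynomial σ R} {a b : ℕ}
    (hp : p.totalDegree ≤ a) (hq : q.totalDegree ≤ b) :
    homogeneousComponent (a + b) (p * q) = homogeneousComponent a p * homogeneousComponent b q := by
  have hterm : ∀ j l, homogeneousComponent (a + b)
      (homogeneousComponent j p * homogeneousComponent l q) =
      if a + b = j + l then homogeneousComponent j p * homogeneousComponent l q else 0 :=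
    fun j l => homogeneousComponent_of_mem
      ((homogeneousComponent_isHomogeneous j p).mul (homogeneousComponent_isHomogeneous l q))
  conv_lhs => rw [← sum_range_homogeneousComponent_of_totalDegree_le hp,
    ← sum_range_homogeneousComponent_of_totalDegree_le hq, sum_mul_sum]
  simp_rw [map_sum, hterm]
  -- as `j ≤ a` and `l ≤ b`, only the term `j = a, l = b` has degree `a + b`
  rw [sum_eq_single a (fun j hj hja => sum_eq_zero fun l hl => if_neg ?_) (by simp),
    sum_eq_single b (fun l hl hlb => if_neg ?_) (by simp), if_pos rfl]
  all_goals simp only [mem_range] at *; omega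

theorem totalDegree_pderiv_le {p : MvPolynomial σ R} {k : ℕ} (i : σ)
    (h : p.totalDegree ≤ k + 1) : (pderiv i p).totalDegree ≤ k := by
  rw [← sum_range_homogeneousComponent_of_totalDegree_le h, map_sum]
  refine (totalDegree_finsetSum _ _).trans (Finset.sup_le fun j hj => ?_)
  have := ((homogeneousComponent_isHomogeneous j p).pderiv (i := i)).totalDegree_le
  simp only [mem_range] at hj
  omega

theorem homogeneousComponent_pderiv (i : σ) (k : ℕ) (p : MvPolynomial σ R) :
    homogeneousComponent k (pderiv i p) = pderiv i (homogeneousComponent (k + 1) p) := by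
  induction p using MvPolynomial.induction_on' with
  | monomial d c =>
    have hd : (monomial d c).IsHomogeneous d.degree := isHomogeneous_monomial c rfl
    rw [homogeneousComponent_of_mem hd.pderiv, homogeneousComponent_of_mem hd]
    by_cases hk : k + 1 = d.degree
    · rw [if_pos (by omega), if_pos hk]
    · rw [if_neg hk, map_zero]
      -- `k = d.degree - 1` without `k + 1 = d.degree` forces the truncated case `d = 0`
      split_ifs with hk'
      · rw [(Finsupp.degree_eq_zero_iff d).mp (by omega), monomial_zero', pderiv_C]
      · rfl
  | add p q hp hq => simp only [map_add, hp, hq]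

end CommSemiring

variable [Fintype σ]

section CommSemiring

variable [CommSemiring R]

noncomputable def gradNormSq (p : MvPolynomial σ R) : MvPolynomial σ R :=
  ∑ i, pderiv i p ^ 2

noncomputable def laplacian (p : MvPolynomial σ R) : MvPolynomial σ R :=
  ∑ i, pderiv i (pderiv i p)

noncomputable def infLaplacian (p : MvPolynomial σ R) : MvPolynomial σ R :=
  ∑ i, ∑ j, pderiv i p * pderiv j p * pderiv j (pderiv i p)

variable {p : MvPolynomial σ R} {k : ℕ}

theorem totalDegree_gradNormSq_le (h : p.totalDegree ≤ k + 1) :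
    (gradNormSq p).totalDegree ≤ k + k :=
  (totalDegree_finsetSum _ _).trans <| Finset.sup_le fun i _ =>
    (totalDegree_pow _ 2).trans (by have := totalDegree_pderiv_le i h; omega)

theorem totalDegree_laplacian_le (h : p.totalDegree ≤ k + 2) : (laplacian p).totalDegree ≤ k :=
  (totalDegree_finsetSum _ _).trans <| Finset.sup_le fun i _ =>
    totalDegree_pderiv_le i (totalDegree_pderiv_le i h)

theorem homogeneousComponent_gradNormSq (h : p.totalDegree ≤ k + 1) :
    homogeneousComponent (k + k) (gradNormSq p) = gradNormSq (homogeneousComponent (k + 1) p) := by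
  simp only [gradNormSq, map_sum, sq,
    homogeneousComponent_mul_of_totalDegree_le (totalDegree_pderiv_le _ h)
      (totalDegree_pderiv_le _ h), homogeneousComponent_pderiv]

theorem homogeneousComponent_laplacian (k : ℕ) (p : MvPolynomial σ R) :
    homogeneousComponent k (laplacian p) = laplacian (homogeneousComponent (k + 2) p) := by
  simp only [laplacian, map_sum, homogeneousComponent_pderiv]

theorem homogeneousComponent_infLaplacian (h : p.totalDegree ≤ k + 2) :
    homogeneousComponent (k + 1 + (k + 1) + k) (infLaplacian p) =
      infLaplacian (homogeneousComponent (k + 2) p) := by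
  have hd : ∀ i, (pderiv i p).totalDegree ≤ k + 1 := fun i => totalDegree_pderiv_le i h
  have hdd : ∀ i j, (pderiv j (pderiv i p)).totalDegree ≤ k := fun i j =>
    totalDegree_pderiv_le j (hd i)
  have hprod : ∀ i j, (pderiv i p * pderiv j p).totalDegree ≤ k + 1 + (k + 1) := fun i j =>
    (totalDegree_mul _ _).trans (add_le_add (hd i) (hd j))
  simp only [infLaplacian, map_sum, homogeneousComponent_mul_of_totalDegree_le (hprod _ _) (hdd _ _),
    homogeneousComponent_mul_of_totalDegree_le (hd _) (hd _), homogeneousComponent_pderiv]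

end CommSemiring

theorem homogeneousComponent_gradNormSq_mul_laplacian_sub_infLaplacian [CommRing R]
    {p : MvPolynomial σ R} {k : ℕ} (h : p.totalDegree ≤ k + 2) :
    homogeneousComponent (k + 1 + (k + 1) + k) (gradNormSq p * laplacian p - infLaplacian p) =
      gradNormSq (homogeneousComponent (k + 2) p) * laplacian (homogeneousComponent (k + 2) p) -
        infLaplacian (homogeneousComponent (k + 2) p) := by
  rw [map_sub, homogeneousComponent_mul_of_totalDegree_le (totalDegree_gradNormSq_le h)
    (totalDegree_laplacian_le h), homogeneousComponent_gradNormSq h,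
    homogeneousComponent_laplacian, homogeneousComponent_infLaplacian h]

end MvPolynomial

open MvPolynomial

/-- If a polynomial `P` on `ℝⁿ` of degree `m ≥ 2` solves the minimal surface equation
`(1 + |∇P|²)ΔP − ∑ᵢⱼ P_{xᵢ} P_{xⱼ} P_{xᵢxⱼ} = 0`, then its top-degree homogeneous
component `P_m` satisfies `L P_m := |∇P_m|² ΔP_m − ∑ᵢⱼ P_{m,xᵢ} P_{m,xⱼ} P_{m,xᵢxⱼ} = 0`. -/
theorem stmt3 {n : ℕ} (m : ℕ) (hm : 2 ≤ m) (P : MvPolynomial (Fin n) ℝ)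
    (hdeg : P.totalDegree = m)
    (hMSE : (1 + ∑ i : Fin n, (pderiv i P) ^ 2) * (∑ i : Fin n, pderiv i (pderiv i P))
      - ∑ i : Fin n, ∑ j : Fin n,
          pderiv i P * pderiv j P * pderiv j (pderiv i P) = 0) :
    (∑ i : Fin n, (pderiv i (homogeneousComponent m P)) ^ 2)
        * (∑ i : Fin n, pderiv i (pderiv i (homogeneousComponent m P)))
      - ∑ i : Fin n, ∑ j : Fin n,
          pderiv i (homogeneousComponent m P) * pderiv j (homogeneousComponent m P)
            * pderiv j (pderiv i (homogeneousComponent m P)) = 0 := by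
  obtain ⟨k, rfl⟩ : ∃ k, m = k + 2 := ⟨m - 2, by omega⟩
  have hP : P.totalDegree ≤ k + 2 := hdeg.le
  have hMSE' : laplacian P + (gradNormSq P * laplacian P - infLaplacian P) = 0 := by
    rw [← hMSE]; unfold gradNormSq laplacian infLaplacian; ring
  have hΔ : homogeneousComponent (k + 1 + (k + 1) + k) (laplacian P) = 0 :=
    homogeneousComponent_eq_zero _ _ (by have := totalDegree_laplacian_le hP; omega)
  have key := congrArg (homogeneousComponent (k + 1 + (k + 1) + k)) hMSE'
  rwa [map_add, hΔ, zero_add, homogeneousComponent_gradNormSq_mul_laplacian_sub_infLaplacian hP,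
    map_zero] at key
end

section
/- There is no polynomial solution to the minimal surface equation on ℝⁿ of the form P = P_m + P_1 where P_m is a nonzero homogeneous polynomial of degree m ≥ 2 and P_1 is linear. In particular there are no quadratic polynomial solutions. -/
open MvPolynomial

/-!
Write `u = P_m` and let `c = ∇P_1`, a constant vector. The minimal surface operator is quadratic
in `∇P = c + ∇u` and linear in `∇²P = ∇²u`, so it splits into homogeneous parts of degrees
`m - 2`, `2m - 3` and `3m - 4`. These are distinct for `m ≥ 2`, hence the extreme parts vanish:
`(1 + |c|²) Δu = cᵀ ∇²u c` and `|∇u|² Δu = ∇uᵀ ∇²u ∇u`.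

Let `x` maximise `u²` on the unit sphere, `M = u(x) ≠ 0`. Comparing `u(x + t w)²` with
`M² |x + t w|^{2m}` to second order in `t` gives `∇u(x) = m M x` and
`M wᵀ ∇²u(x) w ≤ M² (m |w|² + (m² - 2m) (x·w)²)`. With Euler's identity `∇²u(x) x = (m - 1) ∇u(x)`
the second equation forces `Δu(x) = m (m - 1) M`, and then the first one with `w = c` gives
`(1 + |c|²) m (m - 1) M² ≤ m (m - 1) |c|² M²`, which is absurd.
-/

open Matrix

namespace Polynomial

theorem eval_derivative_eq_zero_of_nonneg {φ : ℝ[X]} {a : ℝ} (hφ : ∀ t, 0 ≤ φ.eval t)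
    (ha : φ.eval a = 0) : φ.derivative.eval a = 0 := by
  have hmin : IsLocalMin (fun t => φ.eval t) a :=
    Filter.Eventually.of_forall fun t => by simpa [ha] using hφ t
  simpa using hmin.deriv_eq_zero

theorem eval_derivative_derivative_nonneg_of_nonneg {φ : ℝ[X]} {a : ℝ}
    (hφ : ∀ t, 0 ≤ φ.eval t) (ha : φ.eval a = 0) : 0 ≤ φ.derivative.derivative.eval a := by
  obtain ⟨ψ, rfl⟩ := dvd_iff_isRoot.mpr ha
  have hψ : ψ.IsRoot a := by
    simpa using eval_derivative_eq_zero_of_nonneg hφ ha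
  obtain ⟨ρ, rfl⟩ := dvd_iff_isRoot.mpr hψ
  have hρ : ∀ t ≠ a, 0 ≤ ρ.eval t := fun t ht => by
    have := hφ t
    simp only [eval_mul, eval_sub, eval_X, eval_C] at this
    nlinarith [mul_self_pos.mpr (sub_ne_zero.mpr ht)]
  have hρa : 0 ≤ ρ.eval a :=
    ge_of_tendsto (ρ.continuous.continuousAt.tendsto.mono_left nhdsWithin_le_nhds)
      (eventually_nhdsWithin_of_forall (s := {a}ᶜ) hρ)
  simp only [derivative_mul, derivative_sub, derivative_X, derivative_C, sub_zero, one_mul,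
    derivative_add, eval_add, eval_mul, eval_sub, eval_X, eval_C, sub_self, zero_mul, add_zero]
  linarith

end Polynomial

namespace MvPolynomial

theorem IsHomogeneous.eval_smul {σ R : Type*} [CommSemiring R] {m : ℕ} {u : MvPolynomial σ R}
    (hu : u.IsHomogeneous m) (r : R) (y : σ → R) : eval (r • y) u = r ^ m * eval y u := by
  conv_lhs => rw [u.as_sum]
  conv_rhs => rw [u.as_sum]
  rw [map_sum, map_sum, Finset.mul_sum]
  refine Finset.sum_congr rfl fun d hd => ?_
  have hdeg : ∑ i ∈ d.support, d i = m := (hu.degree_eq_sum_deg_support hd).symm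
  simp only [eval_monomial, Pi.smul_apply, smul_eq_mul, mul_pow, Finsupp.prod_mul]
  rw [Finsupp.prod, Finset.prod_pow_eq_pow_sum, hdeg]
  ring

theorem IsHomogeneous.eq_zero_of_add_add_eq_zero {σ R : Type*} [CommSemiring R] {i j k : ℕ}
    {p q r : MvPolynomial σ R} (hp : p.IsHomogeneous i) (hq : q.IsHomogeneous j)
    (hr : r.IsHomogeneous k) (hij : i ≠ j) (hik : i ≠ k) (h : p + q + r = 0) : p = 0 := by
  simpa [homogeneousComponent_of_mem hp, homogeneousComponent_of_mem hq,
    homogeneousComponent_of_mem hr, hij, hik] using congrArg (homogeneousComponent i) h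

section Line
variable {σ R : Type*} [CommSemiring R]

noncomputable def grad (u : MvPolynomial σ R) : σ → MvPolynomial σ R := fun i => pderiv i u

noncomputable def hessian (u : MvPolynomial σ R) : Matrix σ σ (MvPolynomial σ R) :=
  Matrix.of fun i j => pderiv j (pderiv i u)

noncomputable def restrictLine (x w : σ → R) : MvPolynomial σ R →ₐ[R] Polynomial R :=
  aeval fun i => Polynomial.C (x i) + Polynomial.C (w i) * Polynomial.X

theorem eval_restrictLine (x w : σ → R) (p : MvPolynomial σ R) (t : R) :
    (restrictLine x w p).eval t = eval (x + t • w) p := by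
  rw [← Polynomial.coe_aeval_eq_eval, restrictLine, comp_aeval_apply]
  change _ = aeval (x + t • w) p
  congr 2
  funext i
  simp only [map_add, map_mul, Polynomial.aeval_C, Polynomial.aeval_X, Algebra.algebraMap_self,
    RingHom.id_apply, Pi.add_apply, Pi.smul_apply, smul_eq_mul, mul_comm]

variable [Fintype σ]

open Polynomial in
theorem derivative_aeval (g : σ → R[X]) (p : MvPolynomial σ R) :
    derivative (aeval g p) = ∑ i, derivative (g i) * aeval g (pderiv i p) := by
  classical
  induction p using MvPolynomial.induction_on with
  | C a => simp
  | add p q hp hq => simp only [map_add, hp, hq, mul_add, Finset.sum_add_distrib]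
  | mul_X p j hp =>
    simp only [map_mul, map_add, aeval_X, derivative_mul, hp, pderiv_mul, pderiv_X, mul_add,
      Finset.sum_add_distrib, Finset.sum_mul, Pi.single_apply, apply_ite (aeval g), map_zero,
      mul_ite, mul_one, mul_zero, Finset.sum_ite_eq, Finset.mem_univ, if_true]
    simp only [mul_assoc]
    ring

theorem derivative_restrictLine (x w : σ → R) (p : MvPolynomial σ R) :
    Polynomial.derivative (restrictLine x w p)
      = ∑ i, Polynomial.C (w i) * restrictLine x w (pderiv i p) := by
  simp [restrictLine, derivative_aeval]

theorem eval_zero_derivative_restrictLine (x w : σ → R) (p : MvPolynomial σ R) :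
    (Polynomial.derivative (restrictLine x w p)).eval 0 = w ⬝ᵥ (eval x ∘ grad p) := by
  simp [derivative_restrictLine, Polynomial.eval_finsetSum, eval_restrictLine, dotProduct, grad]

theorem eval_zero_derivative_derivative_restrictLine (x w : σ → R) (p : MvPolynomial σ R) :
    (Polynomial.derivative (Polynomial.derivative (restrictLine x w p))).eval 0
      = w ⬝ᵥ (hessian p).map (eval x) *ᵥ w := by
  simp only [derivative_restrictLine, map_sum, Polynomial.derivative_mul, Polynomial.derivative_C,
    zero_mul, Finset.mul_sum, zero_add, Polynomial.eval_finsetSum, Polynomial.eval_mul,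
    Polynomial.eval_C, eval_restrictLine, zero_smul, add_zero, dotProduct, mulVec, hessian,
    map_apply, of_apply]
  exact Finset.sum_congr rfl fun i _ => Finset.sum_congr rfl fun j _ => by ring

end Line

theorem IsHomogeneous.hessian_mulVec {σ R : Type*} [CommRing R] [Fintype σ] {m : ℕ}
    {u : MvPolynomial σ R} (hu : u.IsHomogeneous m) (hm : m ≠ 0) (y : σ → R) :
    (hessian u).map (eval y) *ᵥ y = ((m : R) - 1) • (eval y ∘ grad u) := by
  funext i
  have h := congrArg (eval y) (hu.pderiv (i := i)).sum_X_mul_pderiv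
  simp only [map_sum, map_mul, eval_X, nsmul_eq_mul] at h
  rw [Nat.cast_pred (Nat.pos_of_ne_zero hm)] at h
  simpa [mulVec, dotProduct, hessian, grad, mul_comm] using h

section Real
variable {σ : Type*} [Fintype σ] {u : MvPolynomial σ ℝ} {x : σ → ℝ} {m : ℕ}

open Polynomial in
theorem first_and_second_order_of_sq_eval_le (hx : x ⬝ᵥ x = 1)
    (hmax : ∀ y, eval y u ^ 2 ≤ eval x u ^ 2 * (y ⬝ᵥ y) ^ m) (w : σ → ℝ) :
    eval x u * (w ⬝ᵥ (eval x ∘ grad u)) = m * eval x u ^ 2 * (x ⬝ᵥ w) ∧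
    (w ⬝ᵥ (eval x ∘ grad u)) ^ 2 + eval x u * (w ⬝ᵥ (hessian u).map (eval x) *ᵥ w)
      ≤ eval x u ^ 2 * (2 * m * (m - 1) * (x ⬝ᵥ w) ^ 2 + m * (w ⬝ᵥ w)) := by
  set P := restrictLine x w u
  set Q : ℝ[X] := Polynomial.C (x ⬝ᵥ x) + Polynomial.C (2 * (x ⬝ᵥ w)) * Polynomial.X
    + Polynomial.C (w ⬝ᵥ w) * Polynomial.X ^ 2
  have hQ : ∀ t, Q.eval t = (x + t • w) ⬝ᵥ (x + t • w) := fun t => by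
    simp only [Q, Polynomial.eval_add, Polynomial.eval_mul, Polynomial.eval_C, Polynomial.eval_X,
      Polynomial.eval_pow, add_dotProduct, dotProduct_add, smul_dotProduct, dotProduct_smul,
      smul_eq_mul, dotProduct_comm w x]
    ring
  set φ : ℝ[X] := Polynomial.C (eval x u ^ 2) * Q ^ m - P ^ 2
  have hφ : ∀ t, 0 ≤ φ.eval t := fun t => by
    simpa [φ, P, hQ, eval_restrictLine] using hmax (x + t • w)
  have hφ0 : φ.eval 0 = 0 := by
    simp [φ, P, hQ, eval_restrictLine, hx]
  have h1 := eval_derivative_eq_zero_of_nonneg hφ hφ0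
  have h2 := eval_derivative_derivative_nonneg_of_nonneg hφ hφ0
  have hcast : (m : ℝ) * ((m - 1 : ℕ) : ℝ) = m * (m - 1) := by cases m <;> simp
  simp only [φ, Q, P, map_pow, hx, map_one, map_mul, derivative_sub, derivative_mul,
    derivative_pow, Nat.cast_ofNat, Nat.add_one_sub_one, pow_one, derivative_C, mul_zero, zero_mul,
    map_natCast, derivative_add, derivative_one, add_zero, derivative_X, mul_one, zero_add,
    Polynomial.eval_sub, Polynomial.eval_mul, Polynomial.eval_pow, Polynomial.eval_C,
    eval_natCast, Polynomial.eval_add, eval_one, Polynomial.eval_X, ne_eq, OfNat.ofNat_ne_zero,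
    not_false_eq_true, zero_pow, one_pow, eval_restrictLine, zero_smul,
    eval_zero_derivative_restrictLine, derivative_natCast,
    eval_zero_derivative_derivative_restrictLine, sub_nonneg] at h1 h2
  constructor
  · linear_combination -h1 / 2
  · linear_combination h2 / 2 + 2 * eval x u ^ 2 * (x ⬝ᵥ w) ^ 2 * hcast

theorem eval_comp_grad_eq_of_sq_eval_le (hx : x ⬝ᵥ x = 1) (hM : eval x u ≠ 0)
    (hmax : ∀ y, eval y u ^ 2 ≤ eval x u ^ 2 * (y ⬝ᵥ y) ^ m) :
    eval x ∘ grad u = (m * eval x u) • x := by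
  classical
  funext i
  have h := (first_and_second_order_of_sq_eval_le hx hmax (Pi.single i 1)).1
  rw [single_dotProduct, dotProduct_single, one_mul, mul_one] at h
  refine mul_left_cancel₀ hM (h.trans ?_)
  simp only [Pi.smul_apply, smul_eq_mul]
  ring

theorem isCompact_dotProduct_self_eq_one : IsCompact {x : σ → ℝ | x ⬝ᵥ x = 1} := by
  refine Metric.isCompact_of_isClosed_isBounded
    (isClosed_eq (by fun_prop) continuous_const) ?_
  refine (Metric.isBounded_closedBall (x := 0) (r := 1)).subset fun x hx => ?_
  rw [mem_closedBall_zero_iff, pi_norm_le_iff_of_nonneg zero_le_one]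
  intro i
  rw [Real.norm_eq_abs, abs_le_one_iff_mul_self_le_one, ← Set.mem_ofPred_eq.mp hx]
  exact Finset.single_le_sum (f := fun i => x i * x i) (fun i _ => mul_self_nonneg _)
    (Finset.mem_univ i)

theorem IsHomogeneous.exists_sq_eval_le (hu : u.IsHomogeneous m) (hm : m ≠ 0) (hu0 : u ≠ 0) :
    ∃ x : σ → ℝ, x ⬝ᵥ x = 1 ∧ eval x u ≠ 0 ∧
      ∀ y, eval y u ^ 2 ≤ eval x u ^ 2 * (y ⬝ᵥ y) ^ m := by
  have nonneg (y : σ → ℝ) : 0 ≤ y ⬝ᵥ y := Finset.sum_nonneg fun i _ => mul_self_nonneg (y i)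
  have normalize : ∀ y : σ → ℝ, y ⬝ᵥ y ≠ 0 →
      ∃ z, z ⬝ᵥ z = 1 ∧ eval y u ^ 2 = eval z u ^ 2 * (y ⬝ᵥ y) ^ m := by
    intro y hy
    have hpos : 0 < y ⬝ᵥ y := (nonneg y).lt_of_ne' hy
    set r := Real.sqrt (y ⬝ᵥ y)
    have hr : r ≠ 0 := (Real.sqrt_pos.mpr hpos).ne'
    have hr2 : r ^ 2 = y ⬝ᵥ y := Real.sq_sqrt hpos.le
    refine ⟨r⁻¹ • y, ?_, ?_⟩
    · rw [smul_dotProduct, dotProduct_smul, smul_smul, smul_eq_mul, ← hr2]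
      field_simp
    · have hscale : (r⁻¹ ^ m) ^ 2 * (y ⬝ᵥ y) ^ m = 1 := by
        rw [← hr2, ← pow_mul, ← pow_mul, mul_comm m 2, ← mul_pow, inv_mul_cancel₀ hr, one_pow]
      rw [hu.eval_smul]
      linear_combination -(eval y u ^ 2) * hscale
  have eval_zero : eval 0 u = 0 := by
    simpa [hm] using hu.eval_smul 0 0
  obtain ⟨y₁, hy₁⟩ : ∃ y, eval y u ≠ 0 := by
    by_contra! h
    exact hu0 (MvPolynomial.funext fun y => by simp [h])
  have hy₁0 : y₁ ⬝ᵥ y₁ ≠ 0 := fun h => hy₁ (by rw [dotProduct_self_eq_zero.mp h, eval_zero])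
  obtain ⟨z, hz, -⟩ := normalize y₁ hy₁0
  obtain ⟨x, hx, hmax⟩ := isCompact_dotProduct_self_eq_one.exists_isMaxOn ⟨z, hz⟩
    (continuous_eval u |>.pow 2).continuousOn
  have bound : ∀ y, eval y u ^ 2 ≤ eval x u ^ 2 * (y ⬝ᵥ y) ^ m := by
    intro y
    by_cases hy : y ⬝ᵥ y = 0
    · rw [dotProduct_self_eq_zero.mp hy, eval_zero]
      simp [hm]
    obtain ⟨z, hz, hyz⟩ := normalize y hy
    rw [hyz]
    exact mul_le_mul_of_nonneg_right (hmax hz) (pow_nonneg (nonneg y) m)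
  refine ⟨x, hx, fun h => hy₁ ?_, bound⟩
  simpa [h] using bound y₁

end Real

section MinimalSurface
variable {σ R : Type*} [CommRing R] [Fintype σ] {a b : σ → MvPolynomial σ R}
  {H : Matrix σ σ (MvPolynomial σ R)}

noncomputable def minimalSurfaceForm (a b : σ → MvPolynomial σ R)
    (H : Matrix σ σ (MvPolynomial σ R)) : MvPolynomial σ R :=
  (a ⬝ᵥ b) * H.trace - a ⬝ᵥ H *ᵥ b

theorem trace_hessian_add_minimalSurfaceForm (P : MvPolynomial σ R) :
    (hessian P).trace + minimalSurfaceForm (grad P) (grad P) (hessian P)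
      = (1 + ∑ i, pderiv i P ^ 2) * ∑ i, pderiv i (pderiv i P)
        - ∑ i, ∑ j, pderiv i P * pderiv j P * pderiv j (pderiv i P) := by
  have hquad : ∑ i, pderiv i P * ∑ j, pderiv j (pderiv i P) * pderiv j P
      = ∑ i, ∑ j, pderiv i P * pderiv j P * pderiv j (pderiv i P) := by
    simp only [Finset.mul_sum]
    exact Finset.sum_congr rfl fun i _ => Finset.sum_congr rfl fun j _ => by ring
  simp only [minimalSurfaceForm, trace, diag, hessian, grad, dotProduct, mulVec, of_apply, sq]
  rw [hquad]
  ring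

theorem minimalSurfaceForm_add_add (a k : σ → MvPolynomial σ R)
    (H : Matrix σ σ (MvPolynomial σ R)) :
    minimalSurfaceForm (k + a) (k + a) H = minimalSurfaceForm k k H
      + (minimalSurfaceForm k a H + minimalSurfaceForm a k H) + minimalSurfaceForm a a H := by
  simp only [minimalSurfaceForm, add_dotProduct, dotProduct_add, mulVec_add]
  ring

theorem isHomogeneous_minimalSurfaceForm {k l d : ℕ} (ha : ∀ i, (a i).IsHomogeneous k)
    (hb : ∀ i, (b i).IsHomogeneous l) (hH : ∀ i j, (H i j).IsHomogeneous d) :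
    (minimalSurfaceForm a b H).IsHomogeneous (k + l + d) := by
  have hab : (a ⬝ᵥ b).IsHomogeneous (k + l) :=
    IsHomogeneous.sum _ _ _ fun i _ => (ha i).mul (hb i)
  refine (hab.mul (IsHomogeneous.sum _ _ _ fun i _ => hH i i)).sub
    (IsHomogeneous.sum _ _ _ fun i _ => ?_)
  have h : (a i * (H *ᵥ b) i).IsHomogeneous (k + (d + l)) :=
    (ha i).mul (IsHomogeneous.sum _ _ _ fun j _ => (hH i j).mul (hb j))
  exact (show k + (d + l) = k + l + d by omega) ▸ h

theorem eval_minimalSurfaceForm (x : σ → R) :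
    eval x (minimalSurfaceForm a b H) = ((eval x ∘ a) ⬝ᵥ (eval x ∘ b)) * (H.map (eval x)).trace
      - (eval x ∘ a) ⬝ᵥ H.map (eval x) *ᵥ (eval x ∘ b) := by
  simp only [minimalSurfaceForm, map_sub, map_mul, RingHom.map_dotProduct, AddMonoidHom.map_trace]
  congr 2
  funext i
  exact RingHom.map_mulVec _ _ _ i

end MinimalSurface

theorem IsHomogeneous.minimalSurfaceForm_components_eq_zero {σ R : Type*} [CommRing R]
    [Fintype σ] {u : MvPolynomial σ R} {m : ℕ} (hu : u.IsHomogeneous m) (hm : 2 ≤ m)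
    (k : σ → MvPolynomial σ R) (hk : ∀ i, (k i).IsHomogeneous 0)
    (h : (hessian u).trace + minimalSurfaceForm (k + grad u) (k + grad u) (hessian u) = 0) :
    (hessian u).trace + minimalSurfaceForm k k (hessian u) = 0 ∧
      minimalSurfaceForm (grad u) (grad u) (hessian u) = 0 := by
  have hg (i : σ) : (grad u i).IsHomogeneous (m - 1) := hu.pderiv
  have hH (i j : σ) : (hessian u i j).IsHomogeneous (m - 1 - 1) := hu.pderiv.pderiv
  have hA0 :
      ((hessian u).trace + minimalSurfaceForm k k (hessian u)).IsHomogeneous (m - 1 - 1) :=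
    (IsHomogeneous.sum _ _ _ fun i _ => hH i i).add
      (by simpa using isHomogeneous_minimalSurfaceForm hk hk hH)
  have hA1 : (minimalSurfaceForm k (grad u) (hessian u)
      + minimalSurfaceForm (grad u) k (hessian u)).IsHomogeneous (m - 1 + (m - 1 - 1)) := by
    refine IsHomogeneous.add ?_ ?_
    · simpa using isHomogeneous_minimalSurfaceForm hk hg hH
    · simpa using isHomogeneous_minimalSurfaceForm hg hk hH
  have hA2 := isHomogeneous_minimalSurfaceForm hg hg hH
  rw [minimalSurfaceForm_add_add] at h
  constructor
  · refine hA0.eq_zero_of_add_add_eq_zero hA1 hA2 (by omega) (by omega) ?_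
    linear_combination h
  · refine hA2.eq_zero_of_add_add_eq_zero hA1 hA0 (by omega) (by omega) ?_
    linear_combination h

theorem eq_zero_of_minimalSurfaceForm_eq_zero {σ : Type*} [Fintype σ]
    {u : MvPolynomial σ ℝ} {m : ℕ} (hu : u.IsHomogeneous m) (hm : 2 ≤ m) (c : σ → ℝ)
    (h0 : (hessian u).trace + minimalSurfaceForm (C ∘ c) (C ∘ c) (hessian u) = 0)
    (h2 : minimalSurfaceForm (grad u) (grad u) (hessian u) = 0) : u = 0 := by
  by_contra hu0
  obtain ⟨x, hx, hM, hmax⟩ := hu.exists_sq_eval_le (by omega) hu0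
  have hg := eval_comp_grad_eq_of_sq_eval_le hx hM hmax
  have hHx := hu.hessian_mulVec (by omega) x
  have hsec := (first_and_second_order_of_sq_eval_le hx hmax c).2
  have e0 := congrArg (eval x) h0
  have e2 := congrArg (eval x) h2
  have hc : eval x ∘ C ∘ c = c := by funext i; simp
  simp only [map_add, AddMonoidHom.map_trace, eval_minimalSurfaceForm, map_zero, hc] at e0 e2
  set M := eval x u
  set H := (hessian u).map (eval x)
  rw [hg] at e2 hsec hHx
  simp only [mulVec_smul, hHx, dotProduct_smul, smul_dotProduct, hx, smul_eq_mul,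
    dotProduct_comm c x] at e2 hsec
  have hm0 : (m : ℝ) * M ≠ 0 := mul_ne_zero (by positivity) hM
  have htrace : H.trace = m * (m - 1) * M := by
    apply mul_left_cancel₀ (pow_ne_zero 2 hm0)
    linear_combination e2
  have hCS : (x ⬝ᵥ c) ^ 2 ≤ c ⬝ᵥ c :=
    calc (x ⬝ᵥ c) ^ 2 ≤ (x ⬝ᵥ x) * (c ⬝ᵥ c) := by
          simpa only [dotProduct, sq] using Finset.sum_mul_sq_le_sq_mul_sq Finset.univ x c
      _ = c ⬝ᵥ c := by rw [hx, one_mul]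
  have hmR : (2 : ℝ) ≤ m := by exact_mod_cast hm
  have hpos : 0 < M ^ 2 * (m * (m - 1) + (m ^ 2 - 2 * m) * (c ⬝ᵥ c - (x ⬝ᵥ c) ^ 2)) := by
    have : 0 ≤ ((m : ℝ) ^ 2 - 2 * m) * (c ⬝ᵥ c - (x ⬝ᵥ c) ^ 2) :=
      mul_nonneg (by nlinarith) (by linarith)
    have : 0 < (m : ℝ) * (m - 1) := by nlinarith
    positivity
  rw [htrace] at e0
  have hle : M ^ 2 * (m * (m - 1) + (m ^ 2 - 2 * m) * (c ⬝ᵥ c - (x ⬝ᵥ c) ^ 2)) ≤ 0 := by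
    linear_combination hsec + M * e0
  exact hle.not_gt hpos

end MvPolynomial

/-- There is no polynomial solution of the minimal surface equation on `ℝⁿ` of the form
`P = P_m + P_1` with `P_m` a nonzero homogeneous polynomial of degree `m ≥ 2` and `P_1`
homogeneous linear.  In particular there are no quadratic polynomial solutions. -/
theorem stmt6 {n : ℕ} (m : ℕ) (hm : 2 ≤ m) (Pm P1 : MvPolynomial (Fin n) ℝ)
    (hPm : Pm.IsHomogeneous m) (hPm0 : Pm ≠ 0) (hP1 : P1.IsHomogeneous 1)
    (hMSE : (1 + ∑ i : Fin n, (pderiv i (Pm + P1)) ^ 2)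
          * (∑ i : Fin n, pderiv i (pderiv i (Pm + P1)))
      - ∑ i : Fin n, ∑ j : Fin n,
          pderiv i (Pm + P1) * pderiv j (Pm + P1) * pderiv j (pderiv i (Pm + P1)) = 0) :
    False := by
  obtain ⟨c, hc⟩ : ∃ c : Fin n → ℝ, grad P1 = C ∘ c :=
    ⟨fun i => coeff 0 (pderiv i P1), funext fun i =>
      totalDegree_eq_zero_iff_eq_C.mp ((totalDegree_zero_iff_isHomogeneous _).mpr hP1.pderiv)⟩
  have hgrad : grad (Pm + P1) = C ∘ c + grad Pm := by
    rw [← hc, add_comm (grad P1)]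
    exact funext fun i => map_add (pderiv i) Pm P1
  have hhess : hessian (Pm + P1) = hessian Pm := by
    ext i j
    simp [hessian, map_add, show pderiv i P1 = C (c i) from congrFun hc i]
  obtain ⟨h0, h2⟩ := hPm.minimalSurfaceForm_components_eq_zero hm (C ∘ c)
    (fun _ => isHomogeneous_C _ _)
    (by rw [← hgrad, ← hhess, trace_hessian_add_minimalSurfaceForm, hMSE])
  exact hPm0 (eq_zero_of_minimalSurfaceForm_eq_zero hPm hm c h0 h2)
end
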